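/- arXiv:math/0110268 — 2 statements merged into one kernel-verified Lean document; each statement's English description precedes it below -/
import Mathlib

section
/- Let A be an associative unital algebra, and define φ(u,v) = 1 - u + uv and ψ(u,v) = (1 - u + uv)⁻¹ · u · v whenever 1 - u + uv is invertible. Then φ(u,v) · ψ(u,v) = u · v and, whenever all relevant elements are invertible, the twisted transposition functional equations hold: φ(φ(u,v),ψ(u,v)) = u, ψ(φ(u,v),ψ(u,v)) = v, φ(u,φ(v,w)) = φ(φ(u,v), φ(ψ(u,v),w)), φ(ψ(u,φ(v,w)),ψ(v,w)) = ψ(φ(u,v), φ(ψ(u,v),w)), and ψ(ψ(u,v),w) = ψ(ψ(u,φ(v,w)), ψ(v,w)). -/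
/-- `φ(u,v) = 1 - u + uv` in an associative unital algebra. -/
def phiA {A : Type*} [Ring A] (u v : A) : A := 1 - u + u * v

/-- `ψ(u,v) = (1 - u + uv)⁻¹ u v` in an associative unital algebra. -/
noncomputable def psiA {A : Type*} [Ring A] (u v : A) : A :=
  Ring.inverse (1 - u + u * v) * (u * v)

private lemma unit_mul_inv_mul {A : Type*} [Ring A] {x : A} (h : IsUnit x) (y : A) :
    x * (Ring.inverse x * y) = y := by
  rw [← mul_assoc, Ring.mul_inverse_cancel _ h, one_mul]

private lemma inv_mul_unit_mul {A : Type*} [Ring A] {x : A} (h : IsUnit x) (y : A) :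
    Ring.inverse x * (x * y) = y := by
  rw [← mul_assoc, Ring.inverse_mul_cancel _ h, one_mul]

private lemma psi_def {A : Type*} [Ring A] (u v : A) :
    psiA u v = Ring.inverse (phiA u v) * (u * v) := rfl

private lemma keyA {A : Type*} [Ring A] {u v : A} (h : IsUnit (phiA u v)) :
    phiA u v * psiA u v = u * v := unit_mul_inv_mul h _

theorem stmt_3 {A : Type*} [Ring A] (u v w : A)
    (h1 : IsUnit (phiA u v))
    (h2 : IsUnit (phiA v w))
    (h3 : IsUnit (phiA (psiA u v) w))
    (h4 : IsUnit (phiA u (phiA v w)))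
    (h5 : IsUnit (phiA (phiA u v) (phiA (psiA u v) w)))
    (h6 : IsUnit (phiA (psiA u (phiA v w)) (psiA v w)))
    (h7 : IsUnit (phiA (phiA u v) (psiA u v))) :
    phiA u v * psiA u v = u * v ∧
    phiA (phiA u v) (psiA u v) = u ∧
    psiA (phiA u v) (psiA u v) = v ∧
    phiA u (phiA v w) = phiA (phiA u v) (phiA (psiA u v) w) ∧
    phiA (psiA u (phiA v w)) (psiA v w) = psiA (phiA u v) (phiA (psiA u v) w) ∧
    psiA (psiA u v) w = psiA (psiA u (phiA v w)) (psiA v w) := by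
  have k1 : phiA u v * psiA u v = u * v := keyA h1
  have k2 : phiA v w * psiA v w = v * w := keyA h2
  -- part 2
  have p2 : phiA (phiA u v) (psiA u v) = u := by
    show 1 - phiA u v + phiA u v * psiA u v = u
    rw [k1]; show 1 - (1 - u + u * v) + u * v = u; abel
  -- part 3
  have hu : IsUnit u := p2 ▸ h7
  have p3 : psiA (phiA u v) (psiA u v) = v := by
    rw [psi_def, p2, k1, inv_mul_unit_mul hu]
  -- part 4
  have p4 : phiA u (phiA v w) = phiA (phiA u v) (phiA (psiA u v) w) := by
    show 1 - u + u * phiA v w =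
      1 - phiA u v + phiA u v * (1 - psiA u v + psiA u v * w)
    rw [show phiA u v * (1 - psiA u v + psiA u v * w)
        = phiA u v - phiA u v * psiA u v + (phiA u v * psiA u v) * w by noncomm_ring,
      k1]
    show 1 - u + u * (1 - v + v * w) = 1 - (1 - u + u * v) + ((1 - u + u * v) - u * v + u * v * w)
    noncomm_ring
  -- part 5
  have hXpsi : phiA u (phiA v w) * psiA u (phiA v w) = u * phiA v w := keyA h4
  have p5 : phiA (psiA u (phiA v w)) (psiA v w) = psiA (phiA u v) (phiA (psiA u v) w) := by
    refine h4.mul_left_cancel ?_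
    rw [psi_def (phiA u v), ← p4, unit_mul_inv_mul h4]
    show phiA u (phiA v w) *
        (1 - psiA u (phiA v w) + psiA u (phiA v w) * psiA v w) =
      phiA u v * (1 - psiA u v + psiA u v * w)
    rw [show phiA u (phiA v w) *
        (1 - psiA u (phiA v w) + psiA u (phiA v w) * psiA v w)
        = phiA u (phiA v w) - phiA u (phiA v w) * psiA u (phiA v w)
          + (phiA u (phiA v w) * psiA u (phiA v w)) * psiA v w by noncomm_ring,
      hXpsi,
      show phiA u v * (1 - psiA u v + psiA u v * w)
        = phiA u v - phiA u v * psiA u v + (phiA u v * psiA u v) * w by noncomm_ring,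
      k1, mul_assoc u (phiA v w) (psiA v w), k2]
    show 1 - u + u * phiA v w - u * phiA v w + u * (v * w)
      = 1 - u + u * v - u * v + u * v * w
    noncomm_ring
  -- part 6
  have p6 : psiA (psiA u v) w = psiA (psiA u (phiA v w)) (psiA v w) := by
    refine h6.mul_left_cancel ?_
    rw [psi_def (psiA u (phiA v w)) (psiA v w), unit_mul_inv_mul h6]
    rw [p5, psi_def (phiA u v), ← p4]
    rw [psi_def (psiA u v) w, psi_def u (phiA v w)]
    rw [mul_assoc, ← mul_assoc (phiA u v * phiA (psiA u v) w), mul_assoc (phiA u v),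
      Ring.mul_inverse_cancel _ h3, mul_one]
    -- goal: inverse X * (phiA u v * (psiA u v * w)) = (inverse X * (u * phiA v w)) * psiA v w
    rw [← mul_assoc (phiA u v) (psiA u v) w, k1,
      mul_assoc (Ring.inverse (phiA u (phiA v w))) (u * phiA v w) (psiA v w),
      mul_assoc u (phiA v w) (psiA v w), k2, ← mul_assoc u v w]
  exact ⟨k1, p2, p3, p4, p5, p6⟩
end

section
/- Let λ be a root of det(λ^d·1 - a₁λ^{d-1} + ... + (-1)^d a_d) = 0 where t^d - a₁t^{d-1} + ... + (-1)^d a_d = (t - b₁)···(t - b_d), and suppose λ is not an eigenvalue of b₁, ..., b_{d-1}. Then λ is an eigenvalue of b_d, and every nonzero vector v with (λ^d - a₁λ^{d-1} + ... + (-1)^d a_d)v = 0 satisfies b_d v = λv. -/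
theorem stmt_12 {m d : ℕ} (hd : 0 < d) (a b : Fin d → Matrix (Fin m) (Fin m) ℂ)
    (lam : ℂ) :
    -- the matrix-valued function  t ↦ t^d·1 - a₁ t^{d-1} + ⋯ + (-1)^d a_d
    let M : ℂ → Matrix (Fin m) (Fin m) ℂ := fun t =>
      (t ^ d) • (1 : Matrix (Fin m) (Fin m) ℂ) +
        ∑ i : Fin d, ((-1 : ℂ) ^ (i.val + 1) * t ^ (d - 1 - i.val)) • a i
    -- factorization:  M t = (t - b₁)⋯(t - b_d)  for all t
    (∀ t : ℂ, M t = (List.ofFn fun i : Fin d =>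
        t • (1 : Matrix (Fin m) (Fin m) ℂ) - b i).prod) →
    -- λ is a root of det M
    (M lam).det = 0 →
    -- λ is not an eigenvalue of b₁, …, b_{d-1}
    (∀ i : Fin d, i.val < d - 1 → IsUnit (lam • (1 : Matrix (Fin m) (Fin m) ℂ) - b i)) →
    -- then λ is an eigenvalue of b_d and every kernel vector of M λ is a λ-eigenvector of b_d
    ¬ IsUnit (lam • (1 : Matrix (Fin m) (Fin m) ℂ) - b ⟨d - 1, by omega⟩) ∧
      ∀ v : Fin m → ℂ, v ≠ 0 → (M lam).mulVec v = 0 →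
        (b ⟨d - 1, by omega⟩).mulVec v = lam • v := by
  intro M hfac hdet hunit
  obtain ⟨n, rfl⟩ : ∃ n, d = n + 1 := ⟨d - 1, by omega⟩
  have hlast : (⟨n + 1 - 1, by omega⟩ : Fin (n + 1)) = Fin.last n := rfl
  set L : Matrix (Fin m) (Fin m) ℂ :=
    lam • (1 : Matrix (Fin m) (Fin m) ℂ) - b (Fin.last n) with hL
  set Q : Matrix (Fin m) (Fin m) ℂ :=
    (List.ofFn fun i : Fin n =>
      lam • (1 : Matrix (Fin m) (Fin m) ℂ) - b i.castSucc).prod with hQ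
  have hsplit : M lam = Q * L := by
    rw [hfac lam, List.ofFn_succ']
    simp [hQ, hL]
  have hQunit : IsUnit Q := by
    apply List.prod_isUnit
    intro x hx
    rw [List.mem_ofFn] at hx
    obtain ⟨i, rfl⟩ := hx
    exact hunit i.castSucc (by simpa using i.isLt)
  constructor
  · rw [hlast]
    intro hLu
    rw [hsplit, Matrix.det_mul] at hdet
    have hQd : IsUnit Q.det := (Matrix.isUnit_iff_isUnit_det Q).mp hQunit
    have hLd : IsUnit L.det := (Matrix.isUnit_iff_isUnit_det L).mp hLu
    exact (hQd.mul hLd).ne_zero hdet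
  · intro v _ hv
    rw [hlast]
    rw [hsplit, ← Matrix.mulVec_mulVec] at hv
    have hLv : L.mulVec v = 0 := by
      have hQd := (Matrix.isUnit_iff_isUnit_det Q).mp hQunit
      have := congrArg (fun w => Q⁻¹.mulVec w) hv
      simpa [Matrix.mulVec_mulVec, ← mul_assoc, Matrix.nonsing_inv_mul Q hQd] using this
    have : (lam • (1 : Matrix (Fin m) (Fin m) ℂ)).mulVec v - (b (Fin.last n)).mulVec v = 0 := by
      rw [← Matrix.sub_mulVec]; exact hLv
    have h1 : (lam • (1 : Matrix (Fin m) (Fin m) ℂ)).mulVec v = lam • v := by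
      simp [Matrix.smul_mulVec]
    rw [h1] at this
    exact (sub_eq_zero.mp this).symm
end
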